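/- Let A = (Q, Σ, δ, ρ) be a connected invertible-reversible Mealy automaton with finite connection degree c = cd(A) ≥ 1. If for every u ∈ Q^c and all distinct x, y ∈ Q the words u x and u y lie in different orbits of Q^{c+1} (i.e., all edges coming down from the unique connected component at level c of the orbit tree are labeled by 1), then the group ⟨A⟩ generated by A is finite. -/
import Mathlib


namespace MealyFormal

variable {Q X : Type*}

/-- Extended transition function of the dual automaton: the action of a letter
`i ∈ Σ` on words over the stateset `Q`, defined by
`δ_i(ε) = ε` and `δ_i(x w) = δ_i(x) δ_{ρ_x(i)}(w)`. -/
def dExt (δ : X → Q → Q) (ρ : Q → X → X) : X → List Q → List Q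
  | _, [] => []
  | i, x :: w => δ i x :: dExt δ ρ (ρ x i) w

/-- The action `δ_s = δ_{s_n} ∘ ⋯ ∘ δ_{s_1}` of a word `s` over `Σ` on words over `Q`. -/
def dWord (δ : X → Q → Q) (ρ : Q → X → X) : List X → List Q → List Q
  | [], u => u
  | i :: s, u => dWord δ ρ s (dExt δ ρ i u)

/-- Extended production function: the action of a state `x ∈ Q` on words over the
alphabet `Σ`, defined by `ρ_x(ε) = ε` and `ρ_x(i s) = ρ_x(i) ρ_{δ_i(x)}(s)`. -/
def rExt (δ : X → Q → Q) (ρ : Q → X → X) : Q → List X → List X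
  | _, [] => []
  | x, i :: s => ρ x i :: rExt δ ρ (δ i x) s

/-- The action `ρ_u = ρ_{x_n} ∘ ⋯ ∘ ρ_{x_1}` of a word `u = x_1⋯x_n` over `Q`
on words over `Σ`. -/
def rWord (δ : X → Q → Q) (ρ : Q → X → X) : List Q → List X → List X
  | [], s => s
  | x :: u, s => rWord δ ρ u (rExt δ ρ x s)

/-- `v` lies in the orbit of `u` under the action of the dual automaton. -/
def InOrbit (δ : X → Q → Q) (ρ : Q → X → X) (u v : List Q) : Prop :=
  ∃ s : List X, dWord δ ρ s u = v

/-- The orbit (connected component of the corresponding power) of a word over `Q`. -/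
def orbit (δ : X → Q → Q) (ρ : Q → X → X) (u : List Q) : Set (List Q) :=
  {v | InOrbit δ ρ u v}

/-- The action of the dual automaton on `Q^n` is transitive, i.e. `A^n` is connected. -/
def LevelTransitive (δ : X → Q → Q) (ρ : Q → X → X) (n : ℕ) : Prop :=
  ∀ u v : List Q, u.length = n → v.length = n → InOrbit δ ρ u v

/-- The label `ℓ(u x)` of the nonempty word `u x`:
the number of `z ∈ Q` with `u z` in the orbit of `u x`. -/
noncomputable def label (δ : X → Q → Q) (ρ : Q → X → X) (u : List Q) (x : Q) : ℕ :=
  Set.ncard {z : Q | InOrbit δ ρ (u ++ [x]) (u ++ [z])}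

/-- Prefix of length `i` of the (infinite) word `w = w_1 w_2 ⋯`. -/
def pref (w : ℕ → Q) (i : ℕ) : List Q := (List.range i).map w

/-- The `n`-th power `u^n` of a word `u`. -/
def wpow (u : List Q) (n : ℕ) : List Q := (List.replicate n u).flatten

/-- The group generated by the Mealy automaton: the subgroup of permutations of `Σ*`
generated by the production functions `ρ_x`, `x ∈ Q`. -/
def autGroup (δ : X → Q → Q) (ρ : Q → X → X) : Subgroup (Equiv.Perm (List X)) :=
  Subgroup.closure {π : Equiv.Perm (List X) | ∃ q : Q, ⇑π = rExt δ ρ q}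

/-- The semigroup of maps `Σ* → Σ*` generated under composition by the `ρ_x`, `x ∈ Q`. -/
def prodSemigroup (δ : X → Q → Q) (ρ : Q → X → X) :
    Subsemigroup (Function.End (List X)) :=
  Subsemigroup.closure {f : Function.End (List X) | ∃ q : Q, f = rExt δ ρ q}

/-- The semigroup of maps `Q* → Q*` generated under composition by the `δ_i`, `i ∈ Σ`. -/
def dualSemigroup (δ : X → Q → Q) (ρ : Q → X → X) :
    Subsemigroup (Function.End (List Q)) :=
  Subsemigroup.closure {f : Function.End (List Q) | ∃ i : X, f = dExt δ ρ i}

/-- A word `w` over `Q` is orbital if all its factors of length `c+1`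
belong to the reduction orbit `O2`. -/
def Orbital (c : ℕ) (O2 : Set (List Q)) (w : List Q) : Prop :=
  ∀ f : List Q, f.length = c + 1 → f <:+: w → f ∈ O2

/-- A word is cyclically orbital if each of its powers is orbital. -/
def CycOrbital (c : ℕ) (O2 : Set (List Q)) (w : List Q) : Prop :=
  ∀ n : ℕ, Orbital c O2 (wpow w n)

/-- The standing setup: `A` is a connected invertible-reversible Mealy automaton
with 3 states, `0 < c = cd(A) < ∞`, and `Q^{c+1}` splits into exactly two orbits,
of sizes `2·3^c` and `3^c`; `O2` is the reduction orbit, of size `2·3^c`. -/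
structure StandingSetup (δ : X → Q → Q) (ρ : Q → X → X) (c : ℕ) (O2 : Set (List Q)) :
    Prop where
  card_three : Nat.card Q = 3
  invertible : ∀ q : Q, Function.Bijective (ρ q)
  reversible : ∀ i : X, Function.Bijective (δ i)
  connected : LevelTransitive δ ρ 1
  c_pos : 0 < c
  trans_c : LevelTransitive δ ρ c
  not_trans_succ : ¬ LevelTransitive δ ρ (c + 1)
  O2_is_orbit : ∃ w : List Q, w.length = c + 1 ∧ O2 = orbit δ ρ w
  O2_card : O2.ncard = 2 * 3 ^ c
  other_is_orbit : ∃ w : List Q, w.length = c + 1 ∧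
    orbit δ ρ w = {v : List Q | v.length = c + 1} \ O2
  other_card : ({v : List Q | v.length = c + 1} \ O2).ncard = 3 ^ c


section AuxLemmas

variable (δ : X → Q → Q) (ρ : Q → X → X)

@[simp] lemma dExt_nil' (i : X) : dExt δ ρ i ([] : List Q) = [] := rfl
@[simp] lemma dExt_cons' (i : X) (x : Q) (w : List Q) :
    dExt δ ρ i (x :: w) = δ i x :: dExt δ ρ (ρ x i) w := rfl
@[simp] lemma rExt_nil' (x : Q) : rExt δ ρ x ([] : List X) = [] := rfl
@[simp] lemma rExt_cons' (x : Q) (i : X) (s : List X) :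
    rExt δ ρ x (i :: s) = ρ x i :: rExt δ ρ (δ i x) s := rfl
@[simp] lemma dWord_nil' (u : List Q) : dWord δ ρ [] u = u := rfl
@[simp] lemma dWord_cons' (i : X) (s : List X) (u : List Q) :
    dWord δ ρ (i :: s) u = dWord δ ρ s (dExt δ ρ i u) := rfl
@[simp] lemma rWord_nil' (s : List X) : rWord δ ρ [] s = s := rfl
@[simp] lemma rWord_cons' (x : Q) (u : List Q) (s : List X) :
    rWord δ ρ (x :: u) s = rWord δ ρ u (rExt δ ρ x s) := rfl

lemma rExt_eq_dExt : rExt δ ρ = dExt ρ δ := by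
  funext x s
  induction s generalizing x with
  | nil => rfl
  | cons i s ih => simp [ih]

lemma rWord_eq_dWord : rWord δ ρ = dWord ρ δ := by
  funext u s
  induction u generalizing s with
  | nil => rfl
  | cons x u ih => simp [ih, rExt_eq_dExt]

lemma dExt_length (i : X) (w : List Q) : (dExt δ ρ i w).length = w.length := by
  induction w generalizing i with
  | nil => rfl
  | cons x w ih => simp [ih]

lemma dWord_length (s : List X) (u : List Q) : (dWord δ ρ s u).length = u.length := by
  induction s generalizing u with
  | nil => rfl
  | cons i s ih => simp [ih, dExt_length]

lemma rWord_length (u : List Q) (s : List X) : (rWord δ ρ u s).length = s.length := by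
  rw [rWord_eq_dWord]; exact dWord_length ρ δ u s

lemma dWord_nil_state (s : List X) : dWord δ ρ s ([] : List Q) = [] := by
  induction s with
  | nil => rfl
  | cons i s ih => exact ih

lemma dWord_concat (s t : List X) (u : List Q) :
    dWord δ ρ (s ++ t) u = dWord δ ρ t (dWord δ ρ s u) := by
  induction s generalizing u with
  | nil => rfl
  | cons i s ih => simp [ih]

lemma rWord_concat (u v : List Q) (s : List X) :
    rWord δ ρ (u ++ v) s = rWord δ ρ v (rWord δ ρ u s) := by
  simp only [rWord_eq_dWord]
  exact dWord_concat ρ δ u v s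

lemma dWord_cons_state (s : List X) (x : Q) (w : List Q) :
    dWord δ ρ s (x :: w) = dWord δ ρ s [x] ++ dWord δ ρ (rExt δ ρ x s) w := by
  induction s generalizing x w with
  | nil => simp
  | cons i s ih =>
    show dWord δ ρ s (δ i x :: dExt δ ρ (ρ x i) w) = _
    rw [ih]
    rfl

lemma dWord_append (s : List X) (a b : List Q) :
    dWord δ ρ s (a ++ b) = dWord δ ρ s a ++ dWord δ ρ (rWord δ ρ a s) b := by
  induction a generalizing s with
  | nil => simp [dWord_nil_state]
  | cons x a ih =>
    rw [List.cons_append, dWord_cons_state, ih, dWord_cons_state δ ρ s x a, List.append_assoc]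
    rfl

lemma rWord_append (u : List Q) (s t : List X) :
    rWord δ ρ u (s ++ t) = rWord δ ρ u s ++ rWord δ ρ (dWord δ ρ s u) t := by
  have h := dWord_append ρ δ u s t
  simpa [rWord_eq_dWord] using h

lemma dExt_injective (hrev : ∀ i, Function.Injective (δ i)) (i : X) :
    Function.Injective (dExt δ ρ i) := by
  intro u
  induction u generalizing i with
  | nil =>
    intro v h
    cases v with
    | nil => rfl
    | cons y v => simp at h
  | cons x u ih =>
    intro v h
    cases v with
    | nil => simp at h
    | cons y v =>
      simp only [dExt_cons', List.cons.injEq] at h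
      obtain rfl := hrev i h.1
      rw [ih (ρ x i) h.2]

lemma dWord_injective (hrev : ∀ i, Function.Injective (δ i)) (s : List X) :
    Function.Injective (dWord δ ρ s) := by
  induction s with
  | nil => intro u v h; exact h
  | cons i s ih => intro u v h; exact dExt_injective δ ρ hrev i (ih h)

lemma rWord_injective (hinv : ∀ q, Function.Injective (ρ q)) (u : List Q) :
    Function.Injective (rWord δ ρ u) := by
  rw [rWord_eq_dWord]; exact dWord_injective ρ δ hinv u

lemma dWord_pow (s : List X) (k : ℕ) (u : List Q) :
    dWord δ ρ ((List.replicate k s).flatten) u = (fun v => dWord δ ρ s v)^[k] u := by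
  induction k generalizing u with
  | zero => rfl
  | succ k ih =>
    rw [List.replicate_succ, List.flatten_cons, dWord_concat, ih,
      Function.iterate_succ_apply]

lemma rWord_pow (u : List Q) (k : ℕ) (s : List X) :
    rWord δ ρ ((List.replicate k u).flatten) s = (fun t => rWord δ ρ u t)^[k] s := by
  simp only [rWord_eq_dWord]
  exact dWord_pow ρ δ u k s

lemma inOrbit_trans {u v w : List Q} (h1 : InOrbit δ ρ u v) (h2 : InOrbit δ ρ v w) :
    InOrbit δ ρ u w := by
  obtain ⟨s, rfl⟩ := h1
  obtain ⟨t, rfl⟩ := h2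
  exact ⟨s ++ t, dWord_concat δ ρ s t u⟩

lemma iterate_return {α : Type*} (f : α → α) (hinj : Function.Injective f)
    (u : α) (S : Set α) (hS : S.Finite) (hmem : ∀ k : ℕ, f^[k] u ∈ S) :
    ∃ d : ℕ, f^[d] (f u) = u := by
  haveI := hS.to_subtype
  have key : ∀ a b : ℕ, a < b → f^[a] u = f^[b] u → ∃ d : ℕ, f^[d] (f u) = u := by
    intro a b hab heq
    have hret : f^[b - a] u = u := by
      apply hinj.iterate a
      rw [← Function.iterate_add_apply, Nat.add_sub_cancel' hab.le]
      exact heq.symm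
    obtain ⟨d, hd⟩ : ∃ d, b - a = d + 1 := ⟨b - a - 1, by omega⟩
    have h2 : f^[d + 1] u = u := by rw [← hd]; exact hret
    exact ⟨d, (Function.iterate_succ_apply f d u).symm.trans h2⟩
  obtain ⟨a, b, hab, heq⟩ := Finite.exists_ne_map_eq_of_infinite
    (fun k : ℕ => (⟨f^[k] u, hmem k⟩ : ↥S))
  have heq' : f^[a] u = f^[b] u := congrArg Subtype.val heq
  rcases hab.lt_or_gt with h | h
  · exact key a b h heq'
  · exact key b a h heq'.symm

lemma inOrbit_symm [Finite Q] (hrev : ∀ i, Function.Injective (δ i)) {u v : List Q}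
    (h : InOrbit δ ρ u v) : InOrbit δ ρ v u := by
  obtain ⟨s, rfl⟩ := h
  have hmem : ∀ k : ℕ, (fun w => dWord δ ρ s w)^[k] u ∈ {l : List Q | l.length = u.length} := by
    intro k
    induction k with
    | zero => exact rfl
    | succ k ih =>
      show ((fun w => dWord δ ρ s w)^[k + 1] u).length = u.length
      rw [Function.iterate_succ_apply']
      exact (dWord_length δ ρ s _).trans ih
  obtain ⟨d, hd⟩ := iterate_return (fun w => dWord δ ρ s w) (dWord_injective δ ρ hrev s) u
    {l : List Q | l.length = u.length} (List.finite_length_eq Q u.length) hmem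
  exact ⟨(List.replicate d s).flatten, by rw [dWord_pow]; exact hd⟩

lemma label_one {c : ℕ}
    (hsplit : ∀ u : List Q, u.length = c → ∀ x y : Q, x ≠ y →
      ¬ InOrbit δ ρ (u ++ [x]) (u ++ [y]))
    {w : List Q} {x y : Q} (hw : c ≤ w.length)
    (h : InOrbit δ ρ (w ++ [x]) (w ++ [y])) : x = y := by
  by_contra hxy
  obtain ⟨s, hs⟩ := h
  have hsp := List.take_append_drop (w.length - c) w
  set p := w.take (w.length - c) with hp
  set w₂ := w.drop (w.length - c) with hw₂
  have hlen₂ : w₂.length = c := by rw [hw₂, List.length_drop]; omega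
  rw [← hsp] at hs
  simp only [List.append_assoc] at hs
  rw [dWord_append] at hs
  obtain ⟨-, h2⟩ := List.append_inj hs (dWord_length δ ρ s p)
  exact hsplit w₂ hlen₂ x y hxy ⟨rWord δ ρ p s, h2⟩

lemma dWord_ext [Finite Q] {c : ℕ}
    (hrev : ∀ i, Function.Injective (δ i))
    (hsplit : ∀ u : List Q, u.length = c → ∀ x y : Q, x ≠ y →
      ¬ InOrbit δ ρ (u ++ [x]) (u ++ [y]))
    {s t : List X} (h : ∀ w : List Q, w.length ≤ c → dWord δ ρ s w = dWord δ ρ t w) :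
    ∀ w : List Q, dWord δ ρ s w = dWord δ ρ t w := by
  have H : ∀ n : ℕ, ∀ w : List Q, w.length = n → dWord δ ρ s w = dWord δ ρ t w := by
    intro n
    induction n using Nat.strong_induction_on with
    | _ n ih =>
      intro w hn
      by_cases hcase : w.length ≤ c
      · exact h w hcase
      · push_neg at hcase
        have hne : w ≠ [] := by
          intro h0; rw [h0] at hcase; simp at hcase
        obtain ⟨w', x, rfl⟩ : ∃ w' x, w = w' ++ [x] :=
          ⟨w.dropLast, w.getLast hne, (List.dropLast_append_getLast hne).symm⟩
        have hlen2 : w'.length + 1 = n := by simpa using hn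
        have hcle : c ≤ w'.length := by
          simp only [List.length_append, List.length_cons, List.length_nil] at hcase
          omega
        have ihw : dWord δ ρ s w' = dWord δ ρ t w' := ih w'.length (by omega) w' rfl
        obtain ⟨xs, hxs⟩ := List.length_eq_one_iff.mp
          (show (dWord δ ρ (rWord δ ρ w' s) [x]).length = 1 by rw [dWord_length]; rfl)
        obtain ⟨xt, hxt⟩ := List.length_eq_one_iff.mp
          (show (dWord δ ρ (rWord δ ρ w' t) [x]).length = 1 by rw [dWord_length]; rfl)
        have horb : InOrbit δ ρ (dWord δ ρ t w' ++ [xs]) (dWord δ ρ t w' ++ [xt]) := by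
          have h1 : InOrbit δ ρ (w' ++ [x]) (dWord δ ρ t w' ++ [xs]) :=
            ⟨s, by rw [dWord_append, hxs, ihw]⟩
          have h2 : InOrbit δ ρ (w' ++ [x]) (dWord δ ρ t w' ++ [xt]) :=
            ⟨t, by rw [dWord_append, hxt]⟩
          exact inOrbit_trans δ ρ (inOrbit_symm δ ρ hrev h1) h2
        have hxseq : xs = xt := label_one δ ρ hsplit (by rw [dWord_length]; omega) horb
        rw [dWord_append, dWord_append, hxs, hxt, ihw, hxseq]
  exact fun w => H w.length w rfl

lemma dual_range_finite [Finite Q] {c : ℕ}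
    (hrev : ∀ i, Function.Injective (δ i))
    (hsplit : ∀ u : List Q, u.length = c → ∀ x y : Q, x ≠ y →
      ¬ InOrbit δ ρ (u ++ [x]) (u ++ [y])) :
    Finite ↥(Set.range (fun (s : List X) (u : List Q) => dWord δ ρ s u)) := by
  haveI : Finite ↥{l : List Q | l.length ≤ c} := (List.finite_length_le Q c).to_subtype
  have hlen : ∀ g ∈ Set.range (fun (s : List X) (u : List Q) => dWord δ ρ s u),
      ∀ w : List Q, (g w).length = w.length := by
    rintro g ⟨s, rfl⟩ w
    exact dWord_length δ ρ s w
  refine Finite.of_injective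
    (fun g : ↥(Set.range (fun (s : List X) (u : List Q) => dWord δ ρ s u)) =>
      (fun w : ↥{l : List Q | l.length ≤ c} =>
        (⟨g.1 w.1, (hlen g.1 g.2 w.1).trans_le w.2⟩ : ↥{l : List Q | l.length ≤ c}))) ?_
  rintro ⟨g, s, rfl⟩ ⟨g', t, rfl⟩ hF
  refine Subtype.ext (funext (dWord_ext δ ρ hrev hsplit ?_))
  intro w hw
  exact congrArg Subtype.val (congrFun hF ⟨w, hw⟩)


end AuxLemmas

/-- If all edges coming down from the unique connected component at
level `c = cd(A)` of the orbit tree are labeled by 1 (words `u x` and `u y` with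
`x ≠ y` always lie in different orbits of `Q^{c+1}`), the generated group is finite. -/
theorem all_labels_one_implies_finite
    {Q X : Type*} [Finite Q] [Finite X] [Nonempty Q] [Nonempty X]
    (δ : X → Q → Q) (ρ : Q → X → X) (c : ℕ)
    (hinv : ∀ q : Q, Function.Bijective (ρ q))
    (hrev : ∀ i : X, Function.Bijective (δ i))
    (hconn : LevelTransitive δ ρ 1)
    (hc : 1 ≤ c)
    (htrans : LevelTransitive δ ρ c)
    (hnt : ¬ LevelTransitive δ ρ (c + 1))
    (hsplit : ∀ u : List Q, u.length = c → ∀ x y : Q, x ≠ y →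
      ¬ InOrbit δ ρ (u ++ [x]) (u ++ [y])) :
    Finite ↥(autGroup δ ρ) := by
  classical
  have hrev' : ∀ i, Function.Injective (δ i) := fun i => (hrev i).injective
  have hinv' : ∀ q, Function.Injective (ρ q) := fun q => (hinv q).injective
  haveI hDfin : Finite ↥(Set.range (fun (s : List X) (u : List Q) => dWord δ ρ s u)) :=
    dual_range_finite δ ρ hrev' hsplit
  haveI := Fintype.ofFinite ↥(Set.range (fun (s : List X) (u : List Q) => dWord δ ρ s u))
  set M := Fintype.card ↥(Set.range (fun (s : List X) (u : List Q) => dWord δ ρ s u)) with hM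
  -- every dual word action is realized by a word of length at most M
  have hshort : ∀ s : List X, ∃ s' : List X, s'.length ≤ M ∧
      (fun u => dWord δ ρ s' u) = (fun u => dWord δ ρ s u) := by
    have H : ∀ n : ℕ, ∀ s : List X, s.length = n → ∃ s' : List X, s'.length ≤ M ∧
        (fun u => dWord δ ρ s' u) = (fun u => dWord δ ρ s u) := by
      intro n
      induction n using Nat.strong_induction_on with
      | _ n ih =>
        intro s hn
        by_cases hle : s.length ≤ M
        · exact ⟨s, hle, rfl⟩
        · push_neg at hle
          have key : ∀ a b : Fin (s.length + 1), a.1 < b.1 →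
              ((fun u => dWord δ ρ (s.take a.1) u) = (fun u => dWord δ ρ (s.take b.1) u)) →
              ∃ s' : List X, s'.length ≤ M ∧
                (fun u => dWord δ ρ s' u) = (fun u => dWord δ ρ s u) := by
            intro a b hab' heq'
            have hbl := b.isLt
            have hs'eq : ∀ u, dWord δ ρ (s.take a.1 ++ s.drop b.1) u = dWord δ ρ s u := by
              intro u
              rw [dWord_concat, congrFun heq' u, ← dWord_concat, List.take_append_drop]
            have hlt : (s.take a.1 ++ s.drop b.1).length < n := by
              rw [List.length_append, List.length_take, List.length_drop]
              omega
            obtain ⟨s'', h1, h2⟩ := ih _ hlt _ rfl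
            exact ⟨s'', h1, h2.trans (funext hs'eq)⟩
          have hcard : Fintype.card
              ↥(Set.range (fun (s : List X) (u : List Q) => dWord δ ρ s u))
              < Fintype.card (Fin (s.length + 1)) := by
            rw [Fintype.card_fin]
            omega
          obtain ⟨a, b, hab, heq⟩ := Fintype.exists_ne_map_eq_of_card_lt
            (fun k : Fin (s.length + 1) =>
              (⟨fun u => dWord δ ρ (s.take k.1) u, ⟨s.take k.1, rfl⟩⟩ :
                ↥(Set.range (fun (s : List X) (u : List Q) => dWord δ ρ s u)))) hcard
          have heq' : (fun u => dWord δ ρ (s.take a.1) u)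
              = (fun u => dWord δ ρ (s.take b.1) u) := congrArg Subtype.val heq
          have habv : a.1 ≠ b.1 := fun hv => hab (Fin.ext hv)
          rcases habv.lt_or_gt with h | h
          · exact key a b h heq'
          · exact key b a h heq'.symm
    exact fun s => H s.length s rfl
  -- stabilization of the production functions
  have hstab : ∀ u v : List Q,
      (∀ s : List X, s.length ≤ M + 1 → rWord δ ρ u s = rWord δ ρ v s) →
      ∀ s : List X, rWord δ ρ u s = rWord δ ρ v s := by
    intro u v h
    have H : ∀ n : ℕ, ∀ s : List X, s.length = n → rWord δ ρ u s = rWord δ ρ v s := by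
      intro n
      induction n using Nat.strong_induction_on with
      | _ n ih =>
        intro s hn
        by_cases hle : s.length ≤ M + 1
        · exact h s hle
        · push_neg at hle
          have hne : s ≠ [] := by
            intro h0; rw [h0] at hle; simp at hle
          obtain ⟨s', i, rfl⟩ : ∃ s' i, s = s' ++ [i] :=
            ⟨s.dropLast, s.getLast hne, (List.dropLast_append_getLast hne).symm⟩
          have hlen2 : s'.length + 1 = n := by simpa using hn
          have hlen3 : M + 1 < s'.length + 1 := by simpa using hle
          obtain ⟨s'', hs''len, hs''⟩ := hshort s'
          have hu2 : rWord δ ρ u s'' = rWord δ ρ v s'' := h s'' (by omega)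
          have hu1 : rWord δ ρ u (s'' ++ [i]) = rWord δ ρ v (s'' ++ [i]) := by
            apply h
            simp only [List.length_append, List.length_cons, List.length_nil]
            omega
          rw [rWord_append, rWord_append, hu2] at hu1
          have hsmall := List.append_cancel_left hu1
          have ihs' : rWord δ ρ u s' = rWord δ ρ v s' := ih s'.length (by omega) s' rfl
          have h3 : dWord δ ρ s' u = dWord δ ρ s'' u := (congrFun hs'' u).symm
          have h4 : dWord δ ρ s' v = dWord δ ρ s'' v := (congrFun hs'' v).symm
          rw [rWord_append, rWord_append, ihs', h3, h4, hsmall]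
    exact fun s => H s.length s rfl
  -- the set of production functions is finite
  haveI hRfin : Finite ↥(Set.range (fun (w : List Q) (s : List X) => rWord δ ρ w s)) := by
    haveI : Finite ↥{l : List X | l.length ≤ M + 1} :=
      (List.finite_length_le X (M + 1)).to_subtype
    have hlenR : ∀ g ∈ Set.range (fun (w : List Q) (s : List X) => rWord δ ρ w s),
        ∀ s : List X, (g s).length = s.length := by
      rintro g ⟨w, rfl⟩ s
      exact rWord_length δ ρ w s
    refine Finite.of_injective
      (fun g : ↥(Set.range (fun (w : List Q) (s : List X) => rWord δ ρ w s)) =>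
        (fun s : ↥{l : List X | l.length ≤ M + 1} =>
          (⟨g.1 s.1, (hlenR g.1 g.2 s.1).trans_le s.2⟩ :
            ↥{l : List X | l.length ≤ M + 1}))) ?_
    rintro ⟨g, w1, rfl⟩ ⟨g', w2, rfl⟩ hF
    refine Subtype.ext (funext (hstab w1 w2 ?_))
    intro s hs
    exact congrArg Subtype.val (congrFun hF ⟨s, hs⟩)
  -- every element of the group acts as some rWord
  have hmem_rng : ∀ π : Equiv.Perm (List X), π ∈ autGroup δ ρ →
      ∃ u : List Q, ⇑π = fun s => rWord δ ρ u s := by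
    intro π hπ
    have hπ' : π ∈ Subgroup.closure {π : Equiv.Perm (List X) | ∃ q : Q, ⇑π = rExt δ ρ q} := hπ
    clear hπ
    induction hπ' using Subgroup.closure_induction with
    | mem x hx =>
      obtain ⟨q, hq⟩ := hx
      exact ⟨[q], by rw [hq]; funext s; rfl⟩
    | one => exact ⟨[], rfl⟩
    | mul x y hx hy ihx ihy =>
      obtain ⟨u, hu⟩ := ihx
      obtain ⟨v, hv⟩ := ihy
      refine ⟨v ++ u, funext fun s => ?_⟩
      rw [Equiv.Perm.mul_apply, rWord_concat]
      simp only [hu, hv]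
    | inv x hx ihx =>
      obtain ⟨u, hu⟩ := ihx
      have hinjf : Function.Injective (fun s => rWord δ ρ u s) := rWord_injective δ ρ hinv' u
      have key : ∀ a b : ℕ, a < b →
          ((fun s => rWord δ ρ u s)^[a] = (fun s => rWord δ ρ u s)^[b]) →
          ∃ w : List Q, ⇑x⁻¹ = fun s => rWord δ ρ w s := by
        intro a b hab hiter
        obtain ⟨d, hd⟩ : ∃ d, b - a = d + 1 := ⟨b - a - 1, by omega⟩
        have hret : ∀ s : List X, (fun s => rWord δ ρ u s)^[b - a] s = s := by
          intro s
          apply hinjf.iterate a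
          rw [← Function.iterate_add_apply, Nat.add_sub_cancel' hab.le]
          exact (congrFun hiter s).symm
        refine ⟨(List.replicate d u).flatten, funext fun s => ?_⟩
        have hx1 : x ((fun s => rWord δ ρ u s)^[d] s) = s := by
          have h6 : x ((fun s => rWord δ ρ u s)^[d] s)
              = (fun s => rWord δ ρ u s)^[d + 1] s := by
            rw [hu, Function.iterate_succ_apply']
          rw [h6, ← hd]
          exact hret s
        rw [rWord_pow]
        have h8 : (x⁻¹ : Equiv.Perm (List X)) s = x.symm s := rfl
        rw [h8, Equiv.symm_apply_eq]
        exact hx1.symm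
      obtain ⟨a, b, hab, heq⟩ := Finite.exists_ne_map_eq_of_infinite
        (fun k : ℕ => (⟨fun s => rWord δ ρ ((List.replicate k u).flatten) s,
          ⟨(List.replicate k u).flatten, rfl⟩⟩ :
            ↥(Set.range (fun (w : List Q) (s : List X) => rWord δ ρ w s))))
      have heq' : (fun s => rWord δ ρ u s)^[a] = (fun s => rWord δ ρ u s)^[b] := by
        funext s
        have h9 : rWord δ ρ ((List.replicate a u).flatten) s
            = rWord δ ρ ((List.replicate b u).flatten) s :=
          congrFun (congrArg Subtype.val heq) s
        rwa [rWord_pow, rWord_pow] at h9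
      rcases hab.lt_or_gt with hlt | hlt
      · exact key a b hlt heq'
      · exact key b a hlt heq'.symm
  -- conclude
  have hmemR : ∀ π : ↥(autGroup δ ρ),
      (⇑π.1 : List X → List X) ∈
        Set.range (fun (w : List Q) (s : List X) => rWord δ ρ w s) := by
    rintro ⟨π, hπ⟩
    obtain ⟨u, hu⟩ := hmem_rng π hπ
    exact ⟨u, hu.symm⟩
  refine Finite.of_injective
    (fun π : ↥(autGroup δ ρ) =>
      (⟨⇑π.1, hmemR π⟩ :
        ↥(Set.range (fun (w : List Q) (s : List X) => rWord δ ρ w s)))) ?_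
  intro π π' hpp
  have h9 : (⇑π.1 : List X → List X) = ⇑π'.1 := congrArg Subtype.val hpp
  exact Subtype.ext (Equiv.coe_fn_injective h9)

end MealyFormal
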